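/- (POSS fails linear consistency) For the 2-criteria game A(1) = (1,0), A(2) = (0,1), the unique Pareto-optimal security payoff is (1,1), but the scalar game αA(1)+(1−α)A(2) = (α, 1−α) has value max(α, 1−α) < 1 for every α ∈ (0,1); hence α·1 + (1−α)·1 = 1 is never the value of the convex-combination game, so VPOSS does not satisfy linear consistency A.7. -/
import Mathlib


open Matrix BigOperators

/-- Security level vector of `x`. -/
noncomputable def secVec {k m : ℕ} {n : Fin k → ℕ}
    (A : ∀ ℓ, Matrix (Fin m) (Fin (n ℓ)) ℝ) (x : Fin m → ℝ) : Fin k → ℝ :=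
  fun ℓ => ⨆ j, (x ᵥ* A ℓ) j

/-- The set of Pareto-optimal security level vectors. -/
noncomputable def VPOSS {k m : ℕ} {n : Fin k → ℕ}
    (A : ∀ ℓ, Matrix (Fin m) (Fin (n ℓ)) ℝ) : Set (Fin k → ℝ) :=
  {z | (∃ x ∈ stdSimplex ℝ (Fin m), z = secVec A x) ∧
       ∀ x ∈ stdSimplex ℝ (Fin m), secVec A x ≤ z → secVec A x = z}

/-- Value of a scalar zero-sum matrix game. -/
noncomputable def gameVal {m n : ℕ} (B : Matrix (Fin m) (Fin n) ℝ) : ℝ :=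
  ⨅ x : stdSimplex ℝ (Fin m), ⨆ y : stdSimplex ℝ (Fin n), x.1 ⬝ᵥ B *ᵥ y.1

lemma iSup_fin2 (f : Fin 2 → ℝ) : (⨆ j, f j) = max (f 0) (f 1) := by
  apply le_antisymm
  · exact ciSup_le (fun j => by fin_cases j <;> simp [le_max_left, le_max_right])
  · exact max_le (le_ciSup (Set.finite_range f).bddAbove 0)
      (le_ciSup (Set.finite_range f).bddAbove 1)

lemma simplex1_eq {x : Fin 1 → ℝ} (hx : x ∈ stdSimplex ℝ (Fin 1)) : x = fun _ => 1 := by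
  have := hx.2
  simp [Fin.sum_univ_one] at this
  funext i
  fin_cases i; exact this

lemma one_mem_simplex1 : (fun _ => (1:ℝ)) ∈ stdSimplex ℝ (Fin 1) := by
  constructor
  · intro i; norm_num
  · simp [Fin.sum_univ_one]

lemma vertex0_mem : (![1, 0] : Fin 2 → ℝ) ∈ stdSimplex ℝ (Fin 2) := by
  constructor
  · intro i; fin_cases i <;> norm_num
  · simp [Fin.sum_univ_two]

lemma vertex1_mem : (![0, 1] : Fin 2 → ℝ) ∈ stdSimplex ℝ (Fin 2) := by
  constructor
  · intro i; fin_cases i <;> norm_num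
  · simp [Fin.sum_univ_two]

lemma sup_simplex2 (a b : ℝ) (ha : 0 ≤ a) (hb : 0 ≤ b) :
    (⨆ y : stdSimplex ℝ (Fin 2), a * y.1 0 + b * y.1 1) = max a b := by
  have hub : ∀ y : stdSimplex ℝ (Fin 2), a * y.1 0 + b * y.1 1 ≤ max a b := by
    rintro ⟨y, hy0, hy1⟩
    have h0 := hy0 0; have h1 := hy0 1
    have hs : y 0 + y 1 = 1 := by simpa [Fin.sum_univ_two] using hy1
    calc a * y 0 + b * y 1 ≤ max a b * y 0 + max a b * y 1 := by
          gcongr <;> [exact le_max_left a b; exact le_max_right a b]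
      _ = max a b := by rw [← mul_add, hs, mul_one]
  haveI : Nonempty (stdSimplex ℝ (Fin 2)) := ⟨⟨![1, 0], vertex0_mem⟩⟩
  apply le_antisymm
  · exact ciSup_le hub
  · have hbd : BddAbove (Set.range fun y : stdSimplex ℝ (Fin 2) => a * y.1 0 + b * y.1 1) := by
      refine ⟨max a b, ?_⟩
      rintro _ ⟨y, rfl⟩; exact hub y
    refine max_le ?_ ?_
    · have := le_ciSup hbd ⟨![1, 0], vertex0_mem⟩
      simpa using this
    · have := le_ciSup hbd ⟨![0, 1], vertex1_mem⟩
      simpa using this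

lemma gameVal_row2 (a b : ℝ) (ha : 0 ≤ a) (hb : 0 ≤ b) :
    gameVal (!![a, b] : Matrix (Fin 1) (Fin 2) ℝ) = max a b := by
  have key : ∀ x : stdSimplex ℝ (Fin 1),
      (⨆ y : stdSimplex ℝ (Fin 2), x.1 ⬝ᵥ (!![a, b] : Matrix (Fin 1) (Fin 2) ℝ) *ᵥ y.1)
        = max a b := by
    rintro ⟨x, hx⟩
    have hx1 := simplex1_eq hx
    subst hx1
    have h : ∀ y : stdSimplex ℝ (Fin 2),
        (fun _ => (1:ℝ)) ⬝ᵥ (!![a, b] : Matrix (Fin 1) (Fin 2) ℝ) *ᵥ y.1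
          = a * y.1 0 + b * y.1 1 := by
      intro y
      simp [dotProduct, mulVec, Fin.sum_univ_one, Fin.sum_univ_two]
    rw [iSup_congr h]
    exact sup_simplex2 a b ha hb
  unfold gameVal
  haveI : Nonempty (stdSimplex ℝ (Fin 1)) := ⟨⟨fun _ => 1, one_mem_simplex1⟩⟩
  rw [iInf_congr key]
  exact ciInf_const

/-- failure of linear consistency (A.7) for Pareto-optimal
security payoffs.  For the game `A(1) = (1,0)`, `A(2) = (0,1)`, the unique
Pareto-optimal security payoff is `(1,1)`; the convex-combination game
`αA(1) + (1-α)A(2) = (α, 1-α)` has value `max α (1-α) < 1` for `α ∈ (0,1)`;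
hence `α·1 + (1-α)·1 = 1` is never that value. -/
theorem poss_fails_linear_consistency :
    VPOSS (n := fun _ : Fin 2 => 2) (![(!![1, 0] : Matrix (Fin 1) (Fin 2) ℝ), !![0, 1]])
      = {![(1 : ℝ), 1]} ∧
    (∀ α ∈ Set.Ioo (0 : ℝ) 1,
      gameVal (!![α, 1 - α] : Matrix (Fin 1) (Fin 2) ℝ) = max α (1 - α) ∧
      gameVal (!![α, 1 - α] : Matrix (Fin 1) (Fin 2) ℝ) < 1) ∧
    ∀ α ∈ Set.Ioo (0 : ℝ) 1,
      α * 1 + (1 - α) * 1 ≠ gameVal (!![α, 1 - α] : Matrix (Fin 1) (Fin 2) ℝ) := by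
  have hsec : ∀ x ∈ stdSimplex ℝ (Fin 1),
      secVec (n := fun _ : Fin 2 => 2)
        (![(!![1, 0] : Matrix (Fin 1) (Fin 2) ℝ), !![0, 1]]) x = ![(1:ℝ), 1] := by
    intro x hx
    have hx1 := simplex1_eq hx
    subst hx1
    funext ℓ
    fin_cases ℓ <;>
      simp [secVec, iSup_fin2, vecMul, dotProduct, Fin.sum_univ_one]
  refine ⟨?_, ?_, ?_⟩
  · ext z
    simp only [VPOSS, Set.mem_setOf_eq, Set.mem_singleton_iff]
    constructor
    · rintro ⟨⟨x, hx, rfl⟩, _⟩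
      exact hsec x hx
    · rintro rfl
      refine ⟨⟨fun _ => 1, one_mem_simplex1, (hsec _ one_mem_simplex1).symm⟩, ?_⟩
      intro x hx _
      exact hsec x hx
  · rintro α ⟨h0, h1⟩
    have hv := gameVal_row2 α (1 - α) (le_of_lt h0) (by linarith)
    exact ⟨hv, by rw [hv]; exact max_lt h1 (by linarith)⟩
  · rintro α ⟨h0, h1⟩
    rw [gameVal_row2 α (1 - α) (le_of_lt h0) (by linarith)]
    have : max α (1 - α) < 1 := max_lt h1 (by linarith)
    intro h; linarith [h]
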